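/- Gradient descent convergence for convex Lipschitz functions: let f: ℝⁿ → ℝ be convex and ρ-Lipschitz, let W ⊆ ℝⁿ be a convex set containing the iterates and a minimizer w* with ‖w¹ − w*‖ ≤ B for the initial point w¹. Run subgradient descent for T iterations with step size η = B/(ρ√T), producing iterates w^{t+1} = w^t − η v^t where v^t is a subgradient of f at w^t, and output the average ŵ = (1/T)Σₜ w^t. Then f(ŵ) − f(w*) ≤ Bρ/√T. -/

import Mathlib

open scoped RealInnerProductSpace

/-- Convergence of subgradient descent for convex Lipschitz functions:
with step size `η = B/(ρ√T)` and output the average of the iterates `w¹,…,w^T`,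
the suboptimality is at most `Bρ/√T`. -/
theorem gradient_descent_convergence (n : ℕ) (f : EuclideanSpace ℝ (Fin n) → ℝ)
    (ρ B : ℝ) (hρ : 0 < ρ) (hB : 0 < B)
    (hconv : ConvexOn ℝ Set.univ f)
    (T : ℕ) (hT : 1 ≤ T)
    (w v : ℕ → EuclideanSpace ℝ (Fin n))
    (wstar : EuclideanSpace ℝ (Fin n)) (hmin : ∀ y, f wstar ≤ f y)
    (hinit : ‖w 1 - wstar‖ ≤ B)
    (hsubgrad : ∀ t, ∀ y, f (w t) + ⟪v t, y - w t⟫ ≤ f y)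
    (hgradbound : ∀ t, ‖v t‖ ≤ ρ)
    (hupdate : ∀ t, w (t + 1) = w t - (B / (ρ * Real.sqrt T)) • v t) :
    f ((1 / (T : ℝ)) • ∑ t ∈ Finset.Icc 1 T, w t) - f wstar ≤ B * ρ / Real.sqrt T := by
  have hTpos : (0:ℝ) < T := by exact_mod_cast Nat.lt_of_lt_of_le Nat.zero_lt_one hT
  have hTne : (T:ℝ) ≠ 0 := hTpos.ne'
  set s : ℝ := Real.sqrt T with hsdef
  have hs : 0 < s := Real.sqrt_pos.mpr hTpos
  have hsne : s ≠ 0 := hs.ne'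
  have hss : s * s = T := Real.mul_self_sqrt hTpos.le
  set η : ℝ := B / (ρ * s) with hηdef
  have hηpos : 0 < η := div_pos hB (mul_pos hρ hs)
  set g : ℕ → ℝ := fun t => ⟪v t, w t - wstar⟫ with hgdef
  -- per-step identity
  have hstep : ∀ t, 2 * η * g t
      = ‖w t - wstar‖^2 - ‖w (t+1) - wstar‖^2 + η^2 * ‖v t‖^2 := by
    intro t
    have h1 : w (t+1) - wstar = (w t - wstar) - η • v t := by
      rw [hupdate t]; abel
    have h2 : ‖(w t - wstar) - η • v t‖^2
        = ‖w t - wstar‖^2 - 2 * η * g t + η^2 * ‖v t‖^2 := by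
      rw [norm_sub_sq_real, real_inner_smul_right, norm_smul, Real.norm_eq_abs,
        abs_of_pos hηpos, real_inner_comm]
      simp only [hgdef]
      ring
    rw [h1, h2]; ring
  -- bound each step
  have hgb : ∀ t, 2 * η * g t
      ≤ ‖w t - wstar‖^2 - ‖w (t+1) - wstar‖^2 + η^2 * ρ^2 := by
    intro t
    have hv : ‖v t‖^2 ≤ ρ^2 := by nlinarith [hgradbound t, norm_nonneg (v t)]
    have := hstep t
    nlinarith [sq_nonneg η]
  -- telescoping sum
  have htel : ∑ t ∈ Finset.Icc 1 T, (‖w t - wstar‖^2 - ‖w (t+1) - wstar‖^2)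
      = ‖w 1 - wstar‖^2 - ‖w (T+1) - wstar‖^2 := by
    rw [← Finset.Ico_add_one_right_eq_Icc, Finset.sum_Ico_eq_sum_range]
    have h := Finset.sum_range_sub' (fun i => ‖w (i + 1) - wstar‖^2) T
    simpa [Nat.add_sub_cancel, add_comm, add_assoc, add_left_comm] using h
  have hsumbound : 2 * η * ∑ t ∈ Finset.Icc 1 T, g t ≤ B^2 + T * (η^2 * ρ^2) := by
    have h1 : ∑ t ∈ Finset.Icc 1 T, (2 * η * g t)
        ≤ ∑ t ∈ Finset.Icc 1 T, (‖w t - wstar‖^2 - ‖w (t+1) - wstar‖^2 + η^2 * ρ^2) :=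
      Finset.sum_le_sum fun t _ => hgb t
    rw [← Finset.mul_sum] at h1
    rw [Finset.sum_add_distrib, htel, Finset.sum_const, Nat.card_Icc,
      Nat.add_sub_cancel, nsmul_eq_mul] at h1
    have ha1 : ‖w 1 - wstar‖^2 ≤ B^2 := by nlinarith [hinit, norm_nonneg (w 1 - wstar)]
    have haT : (0:ℝ) ≤ ‖w (T+1) - wstar‖^2 := sq_nonneg _
    linarith
  -- S ≤ B ρ s
  have hS : ∑ t ∈ Finset.Icc 1 T, g t ≤ B * ρ * s := by
    have hkey : B^2 + (T:ℝ) * (η^2 * ρ^2) = 2 * η * (B * ρ * s) := by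
      rw [hηdef, ← hss]; field_simp; ring
    rw [hkey] at hsumbound
    exact le_of_mul_le_mul_left hsumbound (by positivity)
  -- Jensen
  have hjensen : f ((1 / (T : ℝ)) • ∑ t ∈ Finset.Icc 1 T, w t)
      ≤ ∑ t ∈ Finset.Icc 1 T, (1 / (T : ℝ)) * f (w t) := by
    rw [Finset.smul_sum]
    exact hconv.map_sum_le (fun i _ => by positivity)
      (by
        rw [Finset.sum_const, Nat.card_Icc, Nat.add_sub_cancel, nsmul_eq_mul]
        field_simp)
      (fun i _ => Set.mem_univ _)
  -- subgradient bound per iterate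
  have hsub : ∀ t, f (w t) - f wstar ≤ g t := by
    intro t
    have h := hsubgrad t wstar
    have hi : (⟪v t, wstar - w t⟫ : ℝ) = - g t := by
      have hrw : wstar - w t = -(w t - wstar) := by abel
      rw [hrw, inner_neg_right]
    rw [hi] at h
    linarith
  -- combine
  have hmain : f ((1 / (T : ℝ)) • ∑ t ∈ Finset.Icc 1 T, w t) - f wstar
      ≤ (1 / (T : ℝ)) * ∑ t ∈ Finset.Icc 1 T, g t := by
    have h1 : (1 / (T:ℝ)) * ∑ t ∈ Finset.Icc 1 T, (f (w t) - f wstar)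
        = (∑ t ∈ Finset.Icc 1 T, (1 / (T:ℝ)) * f (w t)) - f wstar := by
      rw [Finset.mul_sum]
      simp only [mul_sub, Finset.sum_sub_distrib, Finset.sum_const, Nat.card_Icc,
        Nat.add_sub_cancel, nsmul_eq_mul]
      field_simp
    have h2 : ∑ t ∈ Finset.Icc 1 T, (f (w t) - f wstar) ≤ ∑ t ∈ Finset.Icc 1 T, g t :=
      Finset.sum_le_sum fun t _ => hsub t
    have h3 : (1 / (T : ℝ)) * ∑ t ∈ Finset.Icc 1 T, (f (w t) - f wstar)
        ≤ (1 / (T : ℝ)) * ∑ t ∈ Finset.Icc 1 T, g t :=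
      mul_le_mul_of_nonneg_left h2 (by positivity)
    linarith [hjensen]
  have hfinal : (1 / (T : ℝ)) * (B * ρ * s) = B * ρ / s := by
    rw [← hss]; field_simp
  calc f ((1 / (T : ℝ)) • ∑ t ∈ Finset.Icc 1 T, w t) - f wstar
      ≤ (1 / (T : ℝ)) * ∑ t ∈ Finset.Icc 1 T, g t := hmain
    _ ≤ (1 / (T : ℝ)) * (B * ρ * s) := mul_le_mul_of_nonneg_left hS (by positivity)
    _ = B * ρ / s := hfinal
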